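/- arXiv:math/0605028 — 7 statements merged into one kernel-verified Lean document; each statement's English description precedes it below -/
import Mathlib

section
/- Let F be a finite field of cardinality m and let d > 1 be an integer. Then the special affine group SA(d,F) (the group of permutations of F^d of the form v ↦ A·v + t with A ∈ SL(d,F) and t ∈ F^d) has no proper normal subgroup whose index divides m^d − 1; i.e., every normal subgroup of SA(d,F) whose index divides m^d − 1 equals the whole group. -/
/-! Since the characteristic `p` of `F` divides `m`, it is prime to `m ^ d - 1`, hence to the
order of `SA(d,F) ⧸ H`; so `H` contains every element `g` with `g ^ p = 1`. Translations are such
elements, and so are the elementary transvections, which generate `SL(d,F)`: the reduction to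
diagonal matrices (`diagonal_transvection_induction'`) leaves only `diag(a, a⁻¹)` in two
coordinates, which Whitehead's relation writes as a product of six transvections. Hence these
elements generate `SA(d,F)`. -/

open Matrix

/-- The special affine group `SA(d,F)`: the subgroup of the permutation group of
`F^d` consisting of all maps `v ↦ A ⬝ v + t` with `A ∈ SL(d,F)` and `t ∈ F^d`. -/
def specialAffineGroup (d : ℕ) (F : Type*) [Field F] [Fintype F] :
    Subgroup (Equiv.Perm (Fin d → F)) where
  carrier := {σ | ∃ A : SpecialLinearGroup (Fin d) F, ∃ t : Fin d → F,
    ∀ v, σ v = (A : Matrix (Fin d) (Fin d) F) *ᵥ v + t}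
  one_mem' := ⟨1, 0, fun v => by simp⟩
  mul_mem' := by
    rintro σ τ ⟨A, t, hA⟩ ⟨B, s, hB⟩
    refine ⟨A * B, (A : Matrix (Fin d) (Fin d) F) *ᵥ s + t, fun v => ?_⟩
    simp [Equiv.Perm.mul_apply, hA, hB, Matrix.mulVec_add, Matrix.mulVec_mulVec,
      add_assoc]
  inv_mem' := by
    rintro σ ⟨A, t, hA⟩
    have key : ∀ x : Fin d → F, (A : Matrix (Fin d) (Fin d) F) *ᵥ
        (((A⁻¹ : SpecialLinearGroup (Fin d) F) : Matrix (Fin d) (Fin d) F) *ᵥ x) = x := by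
      intro x
      rw [Matrix.mulVec_mulVec, ← Matrix.SpecialLinearGroup.coe_mul, mul_inv_cancel,
        Matrix.SpecialLinearGroup.coe_one, Matrix.one_mulVec]
    refine ⟨A⁻¹, -(((A⁻¹ : SpecialLinearGroup (Fin d) F) : Matrix (Fin d) (Fin d) F) *ᵥ t),
      fun v => ?_⟩
    apply σ.injective
    rw [Equiv.Perm.inv_def, Equiv.apply_symm_apply, hA, Matrix.mulVec_add, key, Matrix.mulVec_neg, key]
    abel

namespace Matrix.SpecialLinearGroup

section CommRing

variable {ι R : Type*} [Fintype ι] [DecidableEq ι] [CommRing R]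

theorem transvection_pow {i j : ι} (hij : i ≠ j) (b : R) (n : ℕ) :
    transvection hij b ^ n = transvection hij (n • b) := by
  induction n with
  | zero => simp
  | succ n ih => rw [pow_succ, ih, ← transvection_add, succ_nsmul]

end CommRing

variable {ι F : Type*} [Fintype ι] [DecidableEq ι] [Field F]

/-- Whitehead's relation `diag(a, a⁻¹) = w(a) w(-1)`, where `w(a) = t_ij(a) t_ji(-a⁻¹) t_ij(a)`. -/
theorem diag2n_eq_transvection_prod {i j : ι} (hij : i ≠ j) (a : F) (ha : a ≠ 0) :
    diag2n hij a ha = transvection hij a * transvection hij.symm (-a⁻¹) * transvection hij a *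
      transvection hij (-1) * transvection hij.symm 1 * transvection hij (-1) := by
  apply Subtype.ext
  change diagonal _ = Matrix.transvection i j a * Matrix.transvection j i (-a⁻¹) *
    Matrix.transvection i j a * Matrix.transvection i j (-1) * Matrix.transvection j i 1 *
    Matrix.transvection i j (-1)
  simp only [Matrix.transvection, mul_add, add_mul, Matrix.mul_one, Matrix.one_mul,
    single_mul_single_same, single_mul_single_of_ne _ _ _ _ hij,
    single_mul_single_of_ne _ _ _ _ hij.symm]
  ext k l
  simp [single_apply, one_apply, diagonal_apply, ha]
  grind

theorem transvection_induction [Nontrivial ι] (P : SpecialLinearGroup ι F → Prop)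
    (htransvec : ∀ (i j : ι) (hij : i ≠ j) (c : F), P (transvection hij c))
    (hmul : ∀ A B, P A → P B → P (A * B)) (A : SpecialLinearGroup ι F) : P A := by
  refine diagonal_transvection_induction' P A (fun i j hij c hc ↦ ?_) htransvec hmul
  rw [diag2n_eq_transvection_prod hij c hc]
  refine hmul _ _ (hmul _ _ (hmul _ _ (hmul _ _ (hmul _ _ ?_ ?_) ?_) ?_) ?_) ?_
  all_goals exact htransvec _ _ _ _

end Matrix.SpecialLinearGroup

theorem Subgroup.mem_of_pow_eq_one_of_coprime_index {G : Type*} [Group G] (H : Subgroup G)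
    [H.Normal] {n : ℕ} (hn : n.Coprime H.index) {g : G} (hg : g ^ n = 1) : g ∈ H := by
  rw [← QuotientGroup.eq_one_iff, ← orderOf_eq_one_iff]
  refine Nat.eq_one_of_dvd_coprimes hn (orderOf_dvd_of_pow_eq_one ?_)
    (_root_.orderOf_dvd_natCard _)
  rw [← QuotientGroup.mk_pow, hg, QuotientGroup.mk_one]

theorem FiniteField.coprime_ringChar_card_pow_sub_one (F : Type*) [Field F] [Fintype F]
    {d : ℕ} (hd : d ≠ 0) : (ringChar F).Coprime (Fintype.card F ^ d - 1) := by
  have hq : 1 ≤ Fintype.card F ^ d := Nat.one_le_pow _ _ Fintype.card_pos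
  have hcop : (Fintype.card F ^ d).Coprime (Fintype.card F ^ d - 1) :=
    (Nat.coprime_self_sub_right hq).mpr (Nat.coprime_one_right _)
  exact hcop.coprime_dvd_left
    ((ringChar.dvd (FiniteField.cast_card_eq_zero F)).trans (dvd_pow_self _ hd))

namespace specialAffineGroup

variable {d : ℕ} {F : Type*} [Field F] [Fintype F]

def translation (t : Fin d → F) : specialAffineGroup d F :=
  ⟨Equiv.addRight t, 1, t, fun v ↦ by simp⟩

@[simp]
theorem translation_apply (t v : Fin d → F) :
    (translation t : Equiv.Perm (Fin d → F)) v = v + t :=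
  rfl

theorem translation_pow (t : Fin d → F) (n : ℕ) : translation t ^ n = translation (n • t) := by
  induction n with
  | zero => ext v; simp
  | succ n ih =>
    rw [pow_succ, ih]
    refine Subtype.ext (Equiv.ext fun v ↦ ?_)
    simp only [Subgroup.coe_mul, Equiv.Perm.mul_apply, translation_apply, succ_nsmul]
    abel

def linear : SpecialLinearGroup (Fin d) F →* specialAffineGroup d F :=
  (MulAction.toPermHom _ _).codRestrict _ fun A ↦ ⟨A, 0, fun _ ↦ (add_zero _).symm⟩

@[simp]
theorem linear_apply (A : SpecialLinearGroup (Fin d) F) (v : Fin d → F) :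
    (linear A : Equiv.Perm (Fin d → F)) v = (A : Matrix (Fin d) (Fin d) F) *ᵥ v :=
  rfl

theorem exists_eq_translation_mul_linear (g : specialAffineGroup d F) :
    ∃ t A, g = translation t * linear A := by
  obtain ⟨A, t, hg⟩ := g.2
  refine ⟨t, A, ?_⟩
  ext v
  simp [hg]

theorem closure_pow_ringChar_eq_one [Nontrivial (Fin d)] :
    Subgroup.closure {g : specialAffineGroup d F | g ^ ringChar F = 1} = ⊤ := by
  set K := Subgroup.closure {g : specialAffineGroup d F | g ^ ringChar F = 1}
  have htranslation (t : Fin d → F) : translation t ∈ K := by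
    refine Subgroup.subset_closure ?_
    rw [Set.mem_ofPred_eq, translation_pow, ← Nat.cast_smul_eq_nsmul F,
      ringChar.Nat.cast_ringChar, zero_smul]
    ext v
    simp
  have hlinear (A : SpecialLinearGroup (Fin d) F) : linear A ∈ K := by
    refine SpecialLinearGroup.transvection_induction (fun A ↦ linear A ∈ K)
      (fun i j hij c ↦ Subgroup.subset_closure ?_) (fun A B hA hB ↦ ?_) A
    · rw [Set.mem_ofPred_eq, ← map_pow, SpecialLinearGroup.transvection_pow, nsmul_eq_mul,
        ringChar.Nat.cast_ringChar, zero_mul, SpecialLinearGroup.transvection_coeff_zero, map_one]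
    · rw [map_mul]
      exact K.mul_mem hA hB
  rw [eq_top_iff]
  rintro g -
  obtain ⟨t, A, rfl⟩ := exists_eq_translation_mul_linear g
  exact K.mul_mem (htranslation t) (hlinear A)

end specialAffineGroup

/-- `SA(d,F)` (for a finite field `F` with `m` elements and `d > 1`) has no proper
normal subgroup whose index divides `m^d - 1`: every such normal subgroup is the
whole group. -/
theorem specialAffineGroup_no_proper_normal_subgroup_of_index_dvd
    (F : Type*) [Field F] [Fintype F] (m : ℕ) (hm : Fintype.card F = m)
    (d : ℕ) (hd : 1 < d) (H : Subgroup (specialAffineGroup d F)) (hH : H.Normal)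
    (hdvd : H.index ∣ m ^ d - 1) : H = ⊤ := by
  subst hm
  have : Nontrivial (Fin d) := Fin.nontrivial_iff_two_le.mpr hd
  have hp : (ringChar F).Coprime H.index :=
    (FiniteField.coprime_ringChar_card_pow_sub_one F (by omega)).coprime_dvd_right hdvd
  rw [eq_top_iff, ← specialAffineGroup.closure_pow_ringChar_eq_one, Subgroup.closure_le]
  exact fun g hg ↦ H.mem_of_pow_eq_one_of_coprime_index hp hg
end

section
/- Let F be a finite field of cardinality m and let d ≥ 1 be an integer. Then the affine symplectic group ASp(2d,F) (the group of permutations of F^{2d} of the form v ↦ A·v + t with A ∈ Sp(2d,F) and t ∈ F^{2d}) has no proper normal subgroup whose index divides m^{2d} − 1; i.e., every normal subgroup of ASp(2d,F) whose index divides m^{2d} − 1 equals the whole group. -/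
/-!
Let `p` be the characteristic of `F`. Since `p ∣ m`, a subgroup whose index divides `m^{2d} - 1`
has index prime to `p`, so if it is normal it contains every `g` with `g ^ p = 1`. Translations
satisfy this, and so do the symplectic transvections `x ↦ x + c ω(x, v) v`; it remains to see that
these generate `ASp(2d,F)`, i.e. that transvections generate `Sp(2d,F)`.

For the latter, write `e_i, f_i` for the standard hyperbolic pairs and induct on the set `S` of
indices `i` for which `A` does not yet fix `e_i` and `f_i`. Such an `A` preserves the span `U_S`
of the pairs in `S`, and transvections with direction in `U_S` fix the other pairs. On the
nondegenerate space `U_S` they act transitively on nonzero vectors, which moves `A e_i` back to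
`e_i`; those whose direction is moreover orthogonal to `e_i` fix `e_i` and carry every `x` with
`ω(e_i, x) = ω(e_i, f_i)` to `f_i`, which moves `A f_i` back to `f_i`.
-/

open Matrix

def affineSymplecticGroup (d : ℕ) (F : Type*) [Field F] [Fintype F] :
    Subgroup (Equiv.Perm ((Fin d ⊕ Fin d) → F)) where
  carrier := {σ | ∃ A : Matrix.symplecticGroup (Fin d) F, ∃ t : (Fin d ⊕ Fin d) → F,
    ∀ v, σ v = (A : Matrix (Fin d ⊕ Fin d) (Fin d ⊕ Fin d) F) *ᵥ v + t}
  one_mem' := ⟨1, 0, fun v => by simp⟩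
  mul_mem' := by
    rintro σ τ ⟨A, t, hA⟩ ⟨B, s, hB⟩
    refine ⟨A * B, (A : Matrix (Fin d ⊕ Fin d) (Fin d ⊕ Fin d) F) *ᵥ s + t, fun v => ?_⟩
    simp [Equiv.Perm.mul_apply, hA, hB, Matrix.mulVec_add, Matrix.mulVec_mulVec,
      add_assoc]
  inv_mem' := by
    rintro σ ⟨A, t, hA⟩
    have key : ∀ x : (Fin d ⊕ Fin d) → F,
        (A : Matrix (Fin d ⊕ Fin d) (Fin d ⊕ Fin d) F) *ᵥ
          ((↑(A⁻¹) : Matrix (Fin d ⊕ Fin d) (Fin d ⊕ Fin d) F) *ᵥ x) = x := by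
      intro x
      rw [Matrix.mulVec_mulVec, ← Submonoid.coe_mul, mul_inv_cancel,
        OneMemClass.coe_one, Matrix.one_mulVec]
    refine ⟨A⁻¹, -((↑(A⁻¹) : Matrix (Fin d ⊕ Fin d) (Fin d ⊕ Fin d) F) *ᵥ t),
      fun v => ?_⟩
    apply σ.injective
    rw [← Equiv.Perm.mul_apply, mul_inv_cancel, Equiv.Perm.one_apply, hA, Matrix.mulVec_add, key, Matrix.mulVec_neg, key]
    abel

theorem Subgroup.eq_top_of_coprime_index {G : Type*} [Group G] (H : Subgroup G) [H.Normal]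
    {n : ℕ} (hn : n.Coprime H.index) (hG : closure {g : G | g ^ n = 1} = ⊤) : H = ⊤ := by
  rw [eq_top_iff, ← hG, closure_le]
  intro g hg
  have hgn : (g : G ⧸ H) ^ n = 1 := by rw [← QuotientGroup.mk_pow, hg, QuotientGroup.mk_one]
  have hgi : (g : G ⧸ H) ^ H.index = 1 := by
    rw [← QuotientGroup.mk_pow, QuotientGroup.eq_one_iff]
    exact H.pow_index_mem g
  have hg1 := pow_gcd_eq_one.2 ⟨hgn, hgi⟩
  rwa [hn.gcd_eq_one, pow_one, QuotientGroup.eq_one_iff] at hg1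

theorem Submodule.exists_mem_apply_ne_zero_and_apply_ne_zero {R M N : Type*} [Semiring R]
    [AddCommMonoid M] [Module R M] [AddCommMonoid N] [Module R N] {D : Submodule R M}
    {φ ψ : M →ₗ[R] N} {a b : M} (ha : a ∈ D) (hb : b ∈ D) (hφ : φ a ≠ 0) (hψ : ψ b ≠ 0) :
    ∃ z ∈ D, φ z ≠ 0 ∧ ψ z ≠ 0 := by
  by_cases hψa : ψ a = 0
  · by_cases hφb : φ b = 0
    · exact ⟨a + b, add_mem ha hb, by simpa [hφb], by simpa [hψa]⟩
    · exact ⟨b, hb, hφb, hψ⟩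
  · exact ⟨a, ha, hφ, hψa⟩

namespace SymplecticGroup

variable {ι R : Type*} [DecidableEq ι] [CommRing R]

variable (ι R) in
def coordSubspace (S : Finset ι) : Submodule R (ι ⊕ ι → R) where
  carrier := {v | ∀ j ∉ S, v (Sum.inl j) = 0 ∧ v (Sum.inr j) = 0}
  add_mem' := by simp_all
  zero_mem' := by simp
  smul_mem' := by simp_all

variable (ι R) in
def basisVectorsOutside (S : Finset ι) : Set (ι ⊕ ι → R) :=
  ⋃ j ∉ S, {Pi.single (Sum.inl j) 1, Pi.single (Sum.inr j) 1}

theorem single_inl_mem_coordSubspace {S : Finset ι} {i : ι} (hi : i ∈ S) :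
    Pi.single (Sum.inl i) 1 ∈ coordSubspace ι R S := fun j hj => by
  simp [ne_of_mem_of_not_mem hi hj |>.symm]

theorem single_inr_mem_coordSubspace {S : Finset ι} {i : ι} (hi : i ∈ S) :
    Pi.single (Sum.inr i) 1 ∈ coordSubspace ι R S := fun j hj => by
  simp [ne_of_mem_of_not_mem hi hj |>.symm]

theorem basisVectorsOutside_eq_insert_insert {S : Finset ι} {i : ι} (hi : i ∉ S) :
    basisVectorsOutside ι R S = insert (Pi.single (Sum.inr i) 1)
      (insert (Pi.single (Sum.inl i) 1) (basisVectorsOutside ι R (insert i S))) := by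
  ext z
  simp only [basisVectorsOutside, Set.mem_iUnion, Set.mem_insert_iff, Set.mem_singleton_iff,
    Finset.mem_insert, not_or]
  constructor
  · rintro ⟨j, hj, hz⟩
    by_cases hji : j = i
    · subst hji; tauto
    · exact Or.inr (Or.inr ⟨j, ⟨hji, hj⟩, hz⟩)
  · rintro (rfl | rfl | ⟨j, ⟨-, hj⟩, hz⟩)
    exacts [⟨i, hi, Or.inr rfl⟩, ⟨i, hi, Or.inl rfl⟩, ⟨j, hj, hz⟩]

variable [Fintype ι]

variable (ι R) in
def symplecticForm : LinearMap.BilinForm R (ι ⊕ ι → R) := toLinearMap₂' R (J ι R)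

local notation "ω" => symplecticForm _ _

theorem symplecticForm_apply (x y : ι ⊕ ι → R) :
    ω x y = ∑ i, (x (Sum.inr i) * y (Sum.inl i) - x (Sum.inl i) * y (Sum.inr i)) := by
  simp [symplecticForm, toLinearMap₂'_apply', J, dotProduct, mulVec, fromBlocks,
    Fintype.sum_sum_type, one_apply, neg_add_eq_sub]

theorem symplecticForm_self (x : ι ⊕ ι → R) : ω x x = 0 := by
  simp [symplecticForm_apply, mul_comm]

theorem symplecticForm_swap (x y : ι ⊕ ι → R) : ω y x = -ω x y := by
  simp only [symplecticForm_apply, ← Finset.sum_neg_distrib]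
  exact Finset.sum_congr rfl fun i _ => by ring

theorem symplecticForm_single_inl_left (j : ι) (y : ι ⊕ ι → R) :
    ω (Pi.single (Sum.inl j) 1) y = -y (Sum.inr j) := by
  simp [symplecticForm_apply, Pi.single_apply]

theorem symplecticForm_single_inr_left (j : ι) (y : ι ⊕ ι → R) :
    ω (Pi.single (Sum.inr j) 1) y = y (Sum.inl j) := by
  simp [symplecticForm_apply, Pi.single_apply]

theorem mem_iff_symplecticForm_mulVec {A : Matrix (ι ⊕ ι) (ι ⊕ ι) R} :
    A ∈ symplecticGroup ι R ↔ ∀ x y, ω (A *ᵥ x) (A *ᵥ y) = ω x y := by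
  have h x y : ω (A *ᵥ x) (A *ᵥ y) = toLinearMap₂' R (Aᵀ * J ι R * A) x y := by
    rw [← toLinearMap₂'_comp]; rfl
  simp_rw [h, mem_iff', ← LinearMap.ext_iff₂, symplecticForm, EmbeddingLike.apply_eq_iff_eq]

theorem symplecticForm_smul (g : symplecticGroup ι R) (x y : ι ⊕ ι → R) :
    ω (g • x) (g • y) = ω x y :=
  mem_iff_symplecticForm_mulVec.1 g.2 x y

theorem ext_smul {g h : symplecticGroup ι R} (H : ∀ x : ι ⊕ ι → R, g • x = h • x) : g = h :=
  Subtype.ext (ext_iff_mulVec.2 H)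

theorem one_add_smul_vecMulVec_mulVec (v x : ι ⊕ ι → R) (c : R) :
    (1 + c • vecMulVec v (J ι R *ᵥ v)) *ᵥ x = x + (c * ω x v) • v := by
  rw [add_mulVec, one_mulVec, smul_mulVec, vecMulVec_mulVec, symplecticForm, toLinearMap₂'_apply',
    dotProduct_comm]
  simp [smul_smul]

def symplecticTransvection (v : ι ⊕ ι → R) (c : R) : symplecticGroup ι R :=
  ⟨1 + c • vecMulVec v (J ι R *ᵥ v), mem_iff_symplecticForm_mulVec.2 fun x y => by
    simp only [one_add_smul_vecMulVec_mulVec, map_add, map_smul, LinearMap.add_apply,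
      LinearMap.smul_apply, smul_eq_mul, symplecticForm_self]
    rw [symplecticForm_swap v y]
    ring⟩

theorem symplecticTransvection_smul (v : ι ⊕ ι → R) (c : R) (x : ι ⊕ ι → R) :
    symplecticTransvection v c • x = x + (c * ω x v) • v :=
  one_add_smul_vecMulVec_mulVec v x c

theorem symplecticTransvection_add (v : ι ⊕ ι → R) (a b : R) :
    symplecticTransvection v (a + b) = symplecticTransvection v a * symplecticTransvection v b := by
  refine ext_smul fun x => ?_
  rw [mul_smul]
  simp only [symplecticTransvection_smul, map_add, map_smul, LinearMap.add_apply,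
    LinearMap.smul_apply, smul_eq_mul, symplecticForm_self]
  module

theorem symplecticTransvection_zero (v : ι ⊕ ι → R) : symplecticTransvection v 0 = 1 :=
  Subtype.ext (by simp [symplecticTransvection])

theorem symplecticTransvection_nsmul (v : ι ⊕ ι → R) (c : R) (n : ℕ) :
    symplecticTransvection v (n • c) = symplecticTransvection v c ^ n := by
  induction n with
  | zero => rw [zero_nsmul, symplecticTransvection_zero, pow_zero]
  | succ n ih => rw [succ_nsmul, symplecticTransvection_add, ih, pow_succ]

theorem symplecticTransvection_pow_ringChar (v : ι ⊕ ι → R) (c : R) :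
    symplecticTransvection v c ^ ringChar R = 1 := by
  rw [← symplecticTransvection_nsmul, nsmul_eq_mul, ringChar.Nat.cast_ringChar, zero_mul,
    symplecticTransvection_zero]

theorem symplecticTransvection_smul_of_symplecticForm_eq_zero {v z : ι ⊕ ι → R}
    (h : ω z v = 0) (c : R) : symplecticTransvection v c • z = z := by
  rw [symplecticTransvection_smul, h, mul_zero, zero_smul, add_zero]

theorem symplecticTransvection_sub_smul_eq_of_isUnit {x y : ι ⊕ ι → R}
    (h : IsUnit (ω x y)) : symplecticTransvection (y - x) ↑h.unit⁻¹ • x = y := by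
  rw [symplecticTransvection_smul, map_sub, symplecticForm_self, sub_zero, h.val_inv_mul,
    one_smul, add_sub_cancel]

variable (ι) in
def transvectionSubgroup (D : Submodule R (ι ⊕ ι → R)) : Subgroup (symplecticGroup ι R) :=
  Subgroup.closure {g | ∃ v ∈ D, ∃ c, symplecticTransvection v c = g}

theorem transvectionSubgroup_mono {D D' : Submodule R (ι ⊕ ι → R)} (h : D ≤ D') :
    transvectionSubgroup ι D ≤ transvectionSubgroup ι D' :=
  Subgroup.closure_mono fun _ ⟨v, hv, c, hg⟩ => ⟨v, h hv, c, hg⟩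

theorem transvectionSubgroup_le_fixingSubgroup {D : Submodule R (ι ⊕ ι → R)}
    {s : Set (ι ⊕ ι → R)} (h : ∀ z ∈ s, ∀ v ∈ D, ω z v = 0) :
    transvectionSubgroup ι D ≤ fixingSubgroup (symplecticGroup ι R) s := by
  rw [transvectionSubgroup, Subgroup.closure_le]
  rintro _ ⟨v, hv, c, rfl⟩
  exact (mem_fixingSubgroup_iff _).2 fun z hz =>
    symplecticTransvection_smul_of_symplecticForm_eq_zero (h z hz v hv) c

theorem exists_mem_transvectionSubgroup_smul_eq {D : Submodule R (ι ⊕ ι → R)}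
    {x y : ι ⊕ ι → R} (hD : y - x ∈ D) (h : IsUnit (ω x y)) :
    ∃ g ∈ transvectionSubgroup ι D, g • x = y :=
  ⟨_, Subgroup.subset_closure ⟨y - x, hD, _, rfl⟩,
    symplecticTransvection_sub_smul_eq_of_isUnit h⟩

theorem exists_mem_transvectionSubgroup_smul_eq_of_isUnit_of_isUnit {D : Submodule R (ι ⊕ ι → R)}
    {x y z : ι ⊕ ι → R} (hxz : z - x ∈ D) (hzy : y - z ∈ D) (hx : IsUnit (ω x z))
    (hy : IsUnit (ω z y)) : ∃ g ∈ transvectionSubgroup ι D, g • x = y := by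
  obtain ⟨g, hg, rfl⟩ := exists_mem_transvectionSubgroup_smul_eq hxz hx
  obtain ⟨h, hh, rfl⟩ := exists_mem_transvectionSubgroup_smul_eq hzy hy
  exact ⟨h * g, mul_mem hh hg, mul_smul h g x⟩

theorem mem_coordSubspace_iff {S : Finset ι} {x : ι ⊕ ι → R} :
    x ∈ coordSubspace ι R S ↔ ∀ z ∈ basisVectorsOutside ι R S, ω z x = 0 := by
  simp only [basisVectorsOutside, Set.mem_iUnion, Set.mem_insert_iff, Set.mem_singleton_iff]
  constructor
  · rintro hx z ⟨j, hj, rfl | rfl⟩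
    · rw [symplecticForm_single_inl_left, (hx j hj).2, neg_zero]
    · rw [symplecticForm_single_inr_left, (hx j hj).1]
  · intro h j hj
    have hl := h _ ⟨j, hj, Or.inr rfl⟩
    have hr := h _ ⟨j, hj, Or.inl rfl⟩
    rw [symplecticForm_single_inr_left] at hl
    rw [symplecticForm_single_inl_left, neg_eq_zero] at hr
    exact ⟨hl, hr⟩

theorem exists_mem_coordSubspace_symplecticForm_ne_zero {S : Finset ι} {x : ι ⊕ ι → R}
    (hx : x ∈ coordSubspace ι R S) (h0 : x ≠ 0) :
    ∃ w ∈ coordSubspace ι R S, ω x w ≠ 0 := by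
  obtain ⟨k, hk⟩ := Function.ne_iff.1 h0
  rcases k with j | j
  · have hj : j ∈ S := by_contra fun hj => hk (hx j hj).1
    exact ⟨_, single_inr_mem_coordSubspace hj, by
      simpa [symplecticForm_swap (Pi.single _ 1) x, symplecticForm_single_inr_left] using hk⟩
  · have hj : j ∈ S := by_contra fun hj => hk (hx j hj).2
    exact ⟨_, single_inl_mem_coordSubspace hj, by
      simpa [symplecticForm_swap (Pi.single _ 1) x, symplecticForm_single_inl_left] using hk⟩

theorem smul_mem_coordSubspace {S : Finset ι} {A : symplecticGroup ι R}
    (hA : A ∈ fixingSubgroup _ (basisVectorsOutside ι R S)) {x : ι ⊕ ι → R}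
    (hx : x ∈ coordSubspace ι R S) : A • x ∈ coordSubspace ι R S := by
  rw [mem_coordSubspace_iff] at hx ⊢
  intro z hz
  rw [← (mem_fixingSubgroup_iff _).1 hA z hz, symplecticForm_smul, hx z hz]

theorem transvectionSubgroup_coordSubspace_le (S : Finset ι) :
    transvectionSubgroup ι (coordSubspace ι R S) ≤
      fixingSubgroup _ (basisVectorsOutside ι R S) :=
  transvectionSubgroup_le_fixingSubgroup fun _ hz _ hv => mem_coordSubspace_iff.1 hv _ hz

section Field

variable {F : Type*} [Field F]

theorem exists_mem_transvectionSubgroup_smul_eq_of_ne_zero {D : Submodule F (ι ⊕ ι → F)}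
    (hD : ∀ x ∈ D, x ≠ 0 → ∃ w ∈ D, ω x w ≠ 0) {x y : ι ⊕ ι → F} (hx : x ∈ D) (hy : y ∈ D)
    (hx0 : x ≠ 0) (hy0 : y ≠ 0) : ∃ g ∈ transvectionSubgroup ι D, g • x = y := by
  obtain ⟨a, ha, hxa⟩ := hD x hx hx0
  obtain ⟨b, hb, hyb⟩ := hD y hy hy0
  obtain ⟨z, hz, hxz, hzy⟩ := Submodule.exists_mem_apply_ne_zero_and_apply_ne_zero
    (φ := ω x) (ψ := (ω).flip y) ha hb hxa (by simpa [symplecticForm_swap b y] using hyb)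
  exact exists_mem_transvectionSubgroup_smul_eq_of_isUnit_of_isUnit (sub_mem hz hx) (sub_mem hy hz)
    hxz.isUnit hzy.isUnit

theorem exists_mem_transvectionSubgroup_smul_eq_of_symplecticForm_eq {D : Submodule F (ι ⊕ ι → F)}
    {e f x : ι ⊕ ι → F} (he : e ∈ D) (hf : f ∈ D) (hx : x ∈ D) (hef : ω e f ≠ 0)
    (hxe : ω e x = ω e f) : ∃ g ∈ transvectionSubgroup ι (D ⊓ LinearMap.ker (ω e)), g • x = f := by
  by_cases hxf : ω x f = 0
  · refine exists_mem_transvectionSubgroup_smul_eq_of_isUnit_of_isUnit (z := e + f)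
      ⟨sub_mem (add_mem he hf) hx, ?_⟩ ⟨by simpa using D.neg_mem he, ?_⟩ ?_ ?_
    all_goals simp [symplecticForm_self, hxf, hxe, symplecticForm_swap e x, hef]
  · refine exists_mem_transvectionSubgroup_smul_eq ⟨sub_mem hf hx, ?_⟩ (Ne.isUnit hxf)
    simp [hxe]

theorem exists_mul_mem_fixingSubgroup_insert_single_inl {S : Finset ι} {i : ι} (hi : i ∈ S)
    {A : symplecticGroup ι F} (hA : A ∈ fixingSubgroup _ (basisVectorsOutside ι F S)) :
    ∃ T ∈ transvectionSubgroup ι (coordSubspace ι F S), T * A ∈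
      fixingSubgroup _ (insert (Pi.single (Sum.inl i) 1) (basisVectorsOutside ι F S)) := by
  have he := single_inl_mem_coordSubspace (R := F) hi
  obtain ⟨T, hT, hTA⟩ := exists_mem_transvectionSubgroup_smul_eq_of_ne_zero
    (fun _ => exists_mem_coordSubspace_symplecticForm_ne_zero) (smul_mem_coordSubspace hA he) he
    (by simp [smul_eq_zero_iff_eq]) (by simp)
  refine ⟨T, hT, (mem_fixingSubgroup_iff _).2 <| Set.forall_mem_insert.2 ⟨?_, ?_⟩⟩
  · rw [mul_smul, hTA]
  · exact (mem_fixingSubgroup_iff _).1 (mul_mem (transvectionSubgroup_coordSubspace_le S hT) hA)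

theorem exists_mul_mem_fixingSubgroup_insert_single_inr {S : Finset ι} {i : ι} (hi : i ∈ S)
    {A : symplecticGroup ι F}
    (hA : A ∈ fixingSubgroup _ (insert (Pi.single (Sum.inl i) 1) (basisVectorsOutside ι F S))) :
    ∃ T ∈ transvectionSubgroup ι (coordSubspace ι F S), T * A ∈ fixingSubgroup _
      (insert (Pi.single (Sum.inr i) 1) (insert (Pi.single (Sum.inl i) 1)
        (basisVectorsOutside ι F S))) := by
  obtain ⟨hAe, hAS⟩ := Set.forall_mem_insert.1 ((mem_fixingSubgroup_iff _).1 hA)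
  have hef : ω (Pi.single (Sum.inl i) 1) (Pi.single (Sum.inr i) (1 : F)) ≠ 0 := by
    simp [symplecticForm_single_inl_left]
  obtain ⟨T, hT, hTA⟩ := exists_mem_transvectionSubgroup_smul_eq_of_symplecticForm_eq
    (single_inl_mem_coordSubspace hi) (single_inr_mem_coordSubspace hi)
    (smul_mem_coordSubspace ((mem_fixingSubgroup_iff _).2 hAS) (single_inr_mem_coordSubspace hi))
    hef (by rw [← hAe, symplecticForm_smul, hAe])
  have hTfix :
      T ∈ fixingSubgroup _ (insert (Pi.single (Sum.inl i) 1) (basisVectorsOutside ι F S)) :=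
    transvectionSubgroup_le_fixingSubgroup (fun z hz v hv => by
      obtain rfl | hz := hz
      exacts [hv.2, mem_coordSubspace_iff.1 hv.1 z hz]) hT
  refine ⟨T, transvectionSubgroup_mono inf_le_left hT,
    (mem_fixingSubgroup_iff _).2 <| Set.forall_mem_insert.2 ⟨?_, ?_⟩⟩
  · rw [mul_smul, hTA]
  · exact (mem_fixingSubgroup_iff _).1 (mul_mem hTfix hA)

theorem mem_transvectionSubgroup_top_of_mem_fixingSubgroup (S : Finset ι)
    {A : symplecticGroup ι F} (hA : A ∈ fixingSubgroup _ (basisVectorsOutside ι F S)) :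
    A ∈ transvectionSubgroup ι ⊤ := by
  induction S using Finset.induction_on generalizing A with
  | empty =>
    suffices A = 1 from this ▸ one_mem _
    refine Subtype.ext (ext_of_mulVec_single fun k => ?_)
    rw [OneMemClass.coe_one, one_mulVec]
    refine (mem_fixingSubgroup_iff _).1 hA _ (Set.mem_iUnion₂.2 ⟨Sum.elim id id k, by simp, ?_⟩)
    rcases k with j | j <;> simp
  | insert i S hi ih =>
    obtain ⟨T₁, hT₁, hA₁⟩ := exists_mul_mem_fixingSubgroup_insert_single_inl
      (Finset.mem_insert_self i S) hA
    obtain ⟨T₂, hT₂, hA₂⟩ := exists_mul_mem_fixingSubgroup_insert_single_inr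
      (Finset.mem_insert_self i S) hA₁
    have hT : T₂ * T₁ ∈ transvectionSubgroup ι ⊤ :=
      transvectionSubgroup_mono le_top (mul_mem hT₂ hT₁)
    rw [← basisVectorsOutside_eq_insert_insert hi, ← mul_assoc] at hA₂
    rw [← inv_mul_cancel_left (T₂ * T₁) A]
    exact mul_mem (inv_mem hT) (ih hA₂)

theorem transvectionSubgroup_top : transvectionSubgroup ι (⊤ : Submodule F (ι ⊕ ι → F)) = ⊤ := by
  refine eq_top_iff.2 fun A _ => mem_transvectionSubgroup_top_of_mem_fixingSubgroup Finset.univ ?_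
  simp [basisVectorsOutside]

theorem closure_pow_ringChar_eq_one :
    Subgroup.closure {g : symplecticGroup ι F | g ^ ringChar F = 1} = ⊤ := by
  rw [eq_top_iff, ← transvectionSubgroup_top, transvectionSubgroup]
  exact Subgroup.closure_mono fun _ ⟨v, _, c, hg⟩ => hg ▸ symplecticTransvection_pow_ringChar v c

end Field

end SymplecticGroup

namespace affineSymplecticGroup

variable {d : ℕ} {F : Type*} [Field F] [Fintype F]

def translation (t : Fin d ⊕ Fin d → F) : affineSymplecticGroup d F :=
  ⟨Equiv.addRight t, 1, t, fun v => by simp⟩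

def ofSymplectic : symplecticGroup (Fin d) F →* affineSymplecticGroup d F :=
  (MulAction.toPermHom _ _).codRestrict _ fun A => ⟨A, 0, fun v => by simp [Submonoid.smul_def]⟩

@[simp]
theorem ofSymplectic_apply (A : symplecticGroup (Fin d) F) (v : Fin d ⊕ Fin d → F) :
    (ofSymplectic A : Equiv.Perm (Fin d ⊕ Fin d → F)) v = (A : Matrix _ _ F) *ᵥ v :=
  rfl

theorem exists_eq_translation_mul_ofSymplectic (g : affineSymplecticGroup d F) :
    ∃ t A, g = translation t * ofSymplectic A := by
  obtain ⟨A, t, hg⟩ := g.2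
  refine ⟨t, A, Subtype.ext (Equiv.ext fun v => ?_)⟩
  simp [hg, translation]

theorem translation_pow_ringChar (t : Fin d ⊕ Fin d → F) : translation t ^ ringChar F = 1 := by
  refine Subtype.ext ?_
  rw [SubgroupClass.coe_pow, translation, Equiv.nsmul_addRight, ← Nat.cast_smul_eq_nsmul F,
    ringChar.Nat.cast_ringChar, zero_smul, Equiv.addRight_zero]
  rfl

theorem closure_pow_ringChar_eq_one :
    Subgroup.closure {g : affineSymplecticGroup d F | g ^ ringChar F = 1} = ⊤ := by
  refine eq_top_iff.2 fun g _ => ?_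
  obtain ⟨t, A, rfl⟩ := exists_eq_translation_mul_ofSymplectic g
  refine mul_mem (Subgroup.subset_closure (translation_pow_ringChar t)) ?_
  have hA : A ∈ Subgroup.closure {g | g ^ ringChar F = 1} :=
    SymplecticGroup.closure_pow_ringChar_eq_one (ι := Fin d) (F := F) ▸ Subgroup.mem_top A
  have hA' := Subgroup.mem_map_of_mem ofSymplectic hA
  rw [MonoidHom.map_closure] at hA'
  refine Subgroup.closure_mono ?_ hA'
  rintro _ ⟨B, hB, rfl⟩
  exact (map_pow ofSymplectic B _).symm.trans (hB ▸ map_one ofSymplectic)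

end affineSymplecticGroup

/-- `ASp(2d,F)` (for a finite field `F` with `m` elements and `d ≥ 1`) has no proper
normal subgroup whose index divides `m^{2d} - 1`: every such normal subgroup is the
whole group. -/
theorem affineSymplecticGroup_no_proper_normal_subgroup_of_index_dvd
    (F : Type*) [Field F] [Fintype F] (m : ℕ) (hm : Fintype.card F = m)
    (d : ℕ) (hd : 1 ≤ d) (H : Subgroup (affineSymplecticGroup d F)) (hH : H.Normal)
    (hdvd : H.index ∣ m ^ (2 * d) - 1) : H = ⊤ := by
  have hpos : 0 < m ^ (2 * d) := by
    subst hm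
    exact pow_pos Fintype.card_pos _
  have hpm : ringChar F ∣ m ^ (2 * d) :=
    (ringChar.dvd (hm ▸ FiniteField.cast_card_eq_zero F)).trans (dvd_pow_self m (by omega))
  have hcop : (ringChar F).Coprime H.index :=
    (((Nat.coprime_self_sub_left hpos).2 (Nat.coprime_one_left _)).symm.coprime_dvd_left hpm)
      |>.coprime_dvd_right hdvd
  exact H.eq_top_of_coprime_index hcop affineSymplecticGroup.closure_pow_ringChar_eq_one
end

section
/- Let p be a prime, r > 1 an integer, q = p^r, and n ≥ 4 an integer not divisible by p. Write n = kq + c with k, c nonnegative integers and 0 < c < q. Then d(n,q) divides k; in particular, if q < n < 2q then d(n,q) = 1. -/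
/-- `d(n,q)`: the greatest common divisor of the integers `⌊n·i/q⌋` over all
integers `i` with `1 ≤ i < q` that are not divisible by `p`. -/
def dnq (p q n : ℕ) : ℕ :=
  Finset.gcd ((Finset.Ico 1 q).filter fun i => ¬ p ∣ i) fun i => n * i / q

/-- Let `p` be a prime, `r > 1`, `q = p^r`, and `n ≥ 4` not divisible by `p`, with
`n = kq + c`, `0 < c < q`. Then `d(n,q)` divides `k`; in particular if `q < n < 2q`
then `d(n,q) = 1`. -/
theorem dnq_dvd_k (p : ℕ) (hp : p.Prime) (r : ℕ) (hr : 1 < r) (q : ℕ) (hq : q = p ^ r)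
    (n : ℕ) (hn : 4 ≤ n) (hpn : ¬ p ∣ n) (k c : ℕ) (hkc : n = k * q + c)
    (hc0 : 0 < c) (hcq : c < q) :
    dnq p q n ∣ k ∧ (q < n ∧ n < 2 * q → dnq p q n = 1) := by
  have hq1 : 1 < q := by
    rw [hq]
    calc 1 < p := hp.one_lt
    _ ≤ p ^ r := Nat.le_self_pow (by omega) p
  have hmem : 1 ∈ (Finset.Ico 1 q).filter fun i => ¬ p ∣ i := by
    simp only [Finset.mem_filter, Finset.mem_Ico, Nat.dvd_one]
    exact ⟨⟨le_refl 1, hq1⟩, hp.ne_one⟩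
  have hdvd : dnq p q n ∣ n * 1 / q := Finset.gcd_dvd hmem
  have hk : n * 1 / q = k := by
    rw [Nat.mul_one, hkc, Nat.add_comm, Nat.add_mul_div_right _ _ (by omega : 0 < q),
      Nat.div_eq_of_lt hcq, Nat.zero_add]
  rw [hk] at hdvd
  refine ⟨hdvd, fun ⟨h1, h2⟩ => ?_⟩
  have hk1 : k = 1 := by nlinarith
  rw [hk1] at hdvd
  exact Nat.dvd_one.mp hdvd
end

section
/- Let p be an odd prime, r > 1 an integer, q = p^r, and n ≥ 4 an integer not divisible by p. If q does not divide n − 1, then d(n,q) = 1. -/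
/-- Let `p` be an odd prime, `r > 1`, `q = p^r`, and `n ≥ 4` not divisible by `p`.
If `q` does not divide `n - 1`, then `d(n,q) = 1`. -/
theorem dnq_eq_one_of_odd_prime (p : ℕ) (hp : p.Prime) (hodd : p ≠ 2)
    (r : ℕ) (hr : 1 < r) (q : ℕ) (hq : q = p ^ r) (n : ℕ) (hn : 4 ≤ n)
    (hpn : ¬ p ∣ n) (hq1 : ¬ q ∣ n - 1) :
    dnq p q n = 1 := by
  have hp3 : 3 ≤ p := by
    have := hp.two_le
    omega
  have hq9 : 9 ≤ q := by
    subst hq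
    calc (9:ℕ) = 3 ^ 2 := by norm_num
    _ ≤ p ^ 2 := Nat.pow_le_pow_left hp3 2
    _ ≤ p ^ r := Nat.pow_le_pow_right (by omega) hr
  have hq0 : 0 < q := by omega
  set a := n / q with ha
  set b := n % q with hb
  have hmod : q * a + b = n := by rw [ha, hb]; exact Nat.div_add_mod n q
  have hblt : b < q := Nat.mod_lt _ hq0
  have hb0 : b ≠ 0 := by
    intro h
    have hqn : q ∣ n := Nat.dvd_of_mod_eq_zero (hb ▸ h)
    exact hpn (dvd_trans (dvd_pow_self p (by omega : r ≠ 0)) (hq ▸ hqn))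
  have hb1 : b ≠ 1 := by
    intro h
    exact hq1 ⟨a, by omega⟩
  have hb2 : 2 ≤ b := by omega
  set k := (q + b - 1) / b with hk
  have hdm := Nat.div_add_mod (q + b - 1) b
  have hmlt : (q + b - 1) % b < b := Nat.mod_lt _ (by omega)
  rw [← hk] at hdm
  have F1 : q ≤ b * k := by omega
  have F2 : b * k ≤ q + b - 1 := by omega
  have F3 : 2 * k ≤ b * k := Nat.mul_le_mul_right k hb2
  have hk2 : 2 ≤ k := by
    by_contra h
    push_neg at h
    interval_cases k <;> omega
  -- choose i
  have key : ∃ i, 1 ≤ i ∧ i < q ∧ ¬ p ∣ i ∧ q ≤ b * i ∧ b * i < 2 * q := by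
    by_cases hpk : p ∣ k
    · -- then k ≠ 2 so k ≥ 3, use i = k + 1
      have hk3 : 3 ≤ k := by
        rcases Nat.lt_or_ge k 3 with h | h
        · have : k = 2 := by omega
          rw [this] at hpk
          have := (Nat.prime_dvd_prime_iff_eq hp Nat.prime_two).mp hpk
          exact absurd this hodd
        · exact h
      have F5 : b * 3 ≤ b * k := Nat.mul_le_mul_left b hk3
      refine ⟨k + 1, by omega, by omega, ?_, ?_, ?_⟩
      · intro h
        have : p ∣ 1 := (Nat.dvd_add_right hpk).mp h
        exact hp.one_lt.ne' (Nat.dvd_one.mp this)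
      · have : b * (k + 1) = b * k + b := by ring
        omega
      · have : b * (k + 1) = b * k + b := by ring
        omega
    · exact ⟨k, by omega, by omega, hpk, F1, by omega⟩
  obtain ⟨i, hi1, hiq, hpi, hbi1, hbi2⟩ := key
  have hmem : ∀ j, 1 ≤ j → j < q → ¬ p ∣ j →
      j ∈ (Finset.Ico 1 q).filter fun i => ¬ p ∣ i := by
    intro j h1 h2 h3
    simp [Finset.mem_filter, Finset.mem_Ico]
    exact ⟨⟨h1, h2⟩, h3⟩
  have hd1 : dnq p q n ∣ a := by
    have : dnq p q n ∣ n * 1 / q :=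
      Finset.gcd_dvd (hmem 1 le_rfl (by omega) (by
        intro h
        exact hp.one_lt.ne' (Nat.dvd_one.mp h)))
    simpa [ha] using this
  have hdi : dnq p q n ∣ a * i + 1 := by
    have hdvd : dnq p q n ∣ n * i / q := Finset.gcd_dvd (hmem i hi1 hiq hpi)
    have hni : n * i = b * i + q * (a * i) := by
      rw [← hmod]; ring
    have hdiv : b * i / q = 1 := by
      apply Nat.div_eq_of_lt_le <;> omega
    rw [hni, Nat.add_mul_div_left _ _ hq0, hdiv] at hdvd
    simpa [Nat.add_comm] using hdvd
  have : dnq p q n ∣ 1 := by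
    have h2 : dnq p q n ∣ a * i := hd1.mul_right i
    have := Nat.dvd_sub hdi h2
    simpa using this
  exact Nat.dvd_one.mp this
end

section
/- Let r > 1 be an integer, q = 2^r, and n ≥ 4 an odd integer. If q does not divide n − 1, then d(n,q) equals 1 or 2. -/
/-- Let `r > 1`, `q = 2^r`, and `n ≥ 4` odd. If `q` does not divide `n - 1`,
then `d(n,q)` equals 1 or 2. -/
theorem dnq_eq_one_or_two (r : ℕ) (hr : 1 < r) (q : ℕ) (hq : q = 2 ^ r)
    (n : ℕ) (hn : 4 ≤ n) (hodd : Odd n) (hq1 : ¬ q ∣ n - 1) :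
    dnq 2 q n = 1 ∨ dnq 2 q n = 2 := by
  have hq4 : 4 ≤ q := by
    subst hq
    calc (4:ℕ) = 2 ^ 2 := by norm_num
    _ ≤ 2 ^ r := Nat.pow_le_pow_right (by norm_num) hr
  have hqpos : 0 < q := by omega
  set a := n % q with ha
  set m := n / q with hm
  have hnm : q * m + a = n := Nat.div_add_mod n q
  have haq : a < q := Nat.mod_lt n hqpos
  -- a is odd
  have h2q : (2:ℕ) ∣ q := by
    subst hq; exact dvd_pow_self 2 (by omega)
  have han : a % 2 = n % 2 := Nat.mod_mod_of_dvd n h2q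
  have hnodd2 : n % 2 = 1 := Nat.odd_iff.mp hodd
  have haodd : a % 2 = 1 := by rw [han, hnodd2]
  -- a ≠ 1
  have ha1 : a ≠ 1 := by
    intro h
    apply hq1
    have : n - 1 = q * m := by omega
    exact this ▸ Dvd.intro m rfl
  have ha3 : 3 ≤ a := by omega
  have hapos : 0 < a := by omega
  -- a does not divide q
  have hadvd : ¬ a ∣ q := by
    intro h
    subst hq
    rcases (Nat.dvd_prime_pow Nat.prime_two).mp h with ⟨k, _, hk⟩
    rcases Nat.eq_zero_or_pos k with hk0 | hk0
    · simp [hk0] at hk; omega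
    · have : 2 ∣ a := hk ▸ dvd_pow_self 2 (by omega)
      omega
  set t := q / a + 1 with ht
  have e1 : a * (q / a) + q % a = q := Nat.div_add_mod q a
  have e2 : q % a < a := Nat.mod_lt q hapos
  have e3 : a * t = a * (q / a) + a := by rw [ht, Nat.mul_add, Nat.mul_one]
  have e4 : a * (q / a) ≠ q := fun h => hadvd ⟨q / a, h.symm⟩
  -- the odd index i₀
  set i₀ := if t % 2 = 1 then t else t + 1 with hi₀
  have hi₀odd : i₀ % 2 = 1 := by
    rw [hi₀]; split <;> omega
  have e5 : a * i₀ = a * t ∨ a * i₀ = a * t + a := by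
    rw [hi₀]; split
    · left; rfl
    · right; rw [Nat.mul_add, Nat.mul_one]
  -- bounds on a * i₀
  have hbound : q < a * i₀ ∧ a * i₀ < 3 * q := by
    obtain ⟨W, hW⟩ : ∃ W, W = a * (q / a) := ⟨_, rfl⟩
    obtain ⟨T, hT⟩ : ∃ T, T = a * t := ⟨_, rfl⟩
    obtain ⟨I, hI⟩ : ∃ I, I = a * i₀ := ⟨_, rfl⟩
    rw [← hW] at e1 e3 e4
    rw [← hT] at e3 e5
    rw [← hI] at e5
    omega
  -- i₀ < q
  have hi₀q : i₀ < q := by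
    have h1 : q / a ≤ q / 3 := Nat.div_le_div_left ha3 (by norm_num)
    have h2 : 3 * (q / 3) ≤ q := Nat.mul_div_le q 3
    have h3 : i₀ ≤ t + 1 := by rw [hi₀]; split <;> omega
    omega
  have hi₀pos : 1 ≤ i₀ := by omega
  -- c := a * i₀ / q ∈ {1, 2}
  set c := a * i₀ / q with hc
  have hc1 : 1 ≤ c := by
    rw [hc, Nat.le_div_iff_mul_le hqpos]; omega
  have hc2 : c < 3 := by
    rw [hc, Nat.div_lt_iff_lt_mul hqpos]; omega
  -- membership
  have mem1 : 1 ∈ (Finset.Ico 1 q).filter fun i => ¬ 2 ∣ i := by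
    simp [Finset.mem_filter, Finset.mem_Ico]; omega
  have memi : i₀ ∈ (Finset.Ico 1 q).filter fun i => ¬ 2 ∣ i := by
    simp [Finset.mem_filter, Finset.mem_Ico]
    refine ⟨⟨hi₀pos, hi₀q⟩, ?_⟩
    omega
  have hd1 : dnq 2 q n ∣ n * 1 / q := Finset.gcd_dvd mem1
  have hd2 : dnq 2 q n ∣ n * i₀ / q := Finset.gcd_dvd memi
  rw [Nat.mul_one] at hd1
  have hsplit : n * i₀ = q * (m * i₀) + a * i₀ := by rw [← hnm]; ring
  have hdiv : n * i₀ / q = m * i₀ + c := by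
    rw [hsplit, Nat.mul_add_div hqpos, hc]
  rw [hdiv] at hd2
  have hdm : dnq 2 q n ∣ m := hd1
  have hdc : dnq 2 q n ∣ c :=
    (Nat.dvd_add_right (hdm.mul_right i₀)).mp hd2
  interval_cases c
  · left; exact Nat.dvd_one.mp hdc
  · exact (Nat.prime_two.eq_one_or_self_of_dvd _ hdc).imp id id
end

section
/- Let r > 1 be an integer, q = 2^r, and n ≥ 4 an odd integer with q not dividing n − 1. Write n = kq + c with k, c nonnegative integers and 0 < c < q. If k is odd or c < q/2, then d(n,q) = 1. In particular, if n < q/2 then d(n,q) = 1. -/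
private lemma tele (f : ℕ → ℕ) (s : ℕ) :
    ∀ N, (∀ j, j < N → f (j+1) = f j + s) → f N = f 0 + N * s := by
  intro N
  induction N with
  | zero => simp
  | succ m ih =>
    intro h
    rw [h m (by omega), ih (fun j hj => h j (by omega))]
    ring

private lemma exists_step (f : ℕ → ℕ) (N s : ℕ)
    (hstep : ∀ j, j < N → f j + s ≤ f (j+1) ∧ f (j+1) ≤ f j + s + 1)
    (hne : f N ≠ f 0 + N * s) : ∃ j, j < N ∧ f (j+1) = f j + s + 1 := by
  by_contra h
  push_neg at h
  exact hne (tele f s N fun j hj => by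
    have h1 := hstep j hj
    have h2 := h j hj
    omega)

/-- Let `r > 1`, `q = 2^r`, and `n ≥ 4` odd with `q` not dividing `n - 1`. Write
`n = kq + c` with `0 < c < q`. If `k` is odd or `c < q/2`, then `d(n,q) = 1`.
In particular, if `n < q/2` then `d(n,q) = 1`. -/
theorem dnq_eq_one_of_odd_k_or_small_c (r : ℕ) (hr : 1 < r) (q : ℕ) (hq : q = 2 ^ r)
    (n : ℕ) (hn : 4 ≤ n) (hodd : Odd n) (hq1 : ¬ q ∣ n - 1)
    (k c : ℕ) (hkc : n = k * q + c) (hc0 : 0 < c) (hcq : c < q) :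
    (Odd k ∨ c < q / 2 → dnq 2 q n = 1) ∧ (n < q / 2 → dnq 2 q n = 1) := by
  obtain ⟨m, hm, hm0⟩ : ∃ m, q = 4 * m ∧ 0 < m := by
    refine ⟨2 ^ (r - 2), ?_, by positivity⟩
    rw [hq, show r = 2 + (r - 2) by omega, pow_add]
    norm_num
  have hq0 : 0 < q := by omega
  obtain ⟨t, ht⟩ : ∃ t, k * q = 2 * t := ⟨k * (2 * m), by rw [hm]; ring⟩
  have hnodd : n % 2 = 1 := Nat.odd_iff.mp hodd
  have hcodd : c % 2 = 1 := by omega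
  have hc1 : c ≠ 1 := by
    intro h
    apply hq1
    refine ⟨k, ?_⟩
    rw [mul_comm, hkc, h]
    simp
  -- gcd divides each value
  have hdvd : ∀ i, 1 ≤ i → i < q → i % 2 = 1 → dnq 2 q n ∣ n * i / q := by
    intro i h1 h2 h3
    apply Finset.gcd_dvd
    simp only [Finset.mem_filter, Finset.mem_Ico]
    omega
  have hval : ∀ i, n * i / q = k * i + c * i / q := by
    intro i
    rw [hkc, show (k * q + c) * i = c * i + k * i * q by ring,
      Nat.add_mul_div_right _ _ hq0, add_comm]
  have hdk : dnq 2 q n ∣ k := by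
    have h := hdvd 1 le_rfl (by omega) rfl
    rw [hval 1, mul_one, mul_one, Nat.div_eq_of_lt hcq] at h
    simpa using h
  set N := 2 * m - 1 with hN
  have hf0 : c * (2 * 0 + 1) / q = 0 := by
    simpa using Nat.div_eq_of_lt (show c * 1 < q by omega)
  have hfN : c * (2 * N + 1) / q = c - 1 := by
    have h1 : 2 * N + 1 = q - 1 := by omega
    have h2 : c * (q - 1) = q * (c - 1) + (q - c) := by
      zify [show 1 ≤ q by omega, show c ≤ q by omega, show 1 ≤ c by omega]
      ring
    rw [h1, h2, Nat.mul_add_div hq0, Nat.div_eq_of_lt (show q - c < q by omega)]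
    omega
  have main : Odd k ∨ c < q / 2 → dnq 2 q n = 1 := by
    intro hcase
    by_cases hA : 2 * c < q
    · -- small c case: steps are 0 or 1, some step is 1, gcd divides 2k+1
      have hstep : ∀ j, j < N →
          c * (2 * j + 1) / q + 0 ≤ c * (2 * (j + 1) + 1) / q ∧
          c * (2 * (j + 1) + 1) / q ≤ c * (2 * j + 1) / q + 0 + 1 := by
        intro j hj
        have e : c * (2 * (j + 1) + 1) = c * (2 * j + 1) + 2 * c := by ring
        constructor
        · have := Nat.div_le_div_right (c := q) (show c * (2 * j + 1) ≤ c * (2 * (j + 1) + 1) by omega)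
          omega
        · have h1 := Nat.div_le_div_right (c := q) (show c * (2 * (j + 1) + 1) ≤ c * (2 * j + 1) + q by omega)
          rw [Nat.add_div_right _ hq0] at h1
          omega
      have hne : c * (2 * N + 1) / q ≠ c * (2 * 0 + 1) / q + N * 0 := by
        rw [hfN, hf0]
        omega
      obtain ⟨j, hjN, hjs⟩ := exists_step _ N 0 hstep hne
      have h1 := hdvd (2 * j + 1) (by omega) (by omega) (by omega)
      have h2 := hdvd (2 * (j + 1) + 1) (by omega) (by omega) (by omega)
      rw [hval] at h1 h2
      rw [hjs] at h2
      have e : k * (2 * (j + 1) + 1) + (c * (2 * j + 1) / q + 0 + 1)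
          = (k * (2 * j + 1) + c * (2 * j + 1) / q) + (2 * k + 1) := by ring
      rw [e] at h2
      have h3 : dnq 2 q n ∣ 2 * k + 1 := (Nat.dvd_add_right h1).mp h2
      have h4 := Nat.dvd_sub h3 (Dvd.dvd.mul_left hdk 2)
      rw [show 2 * k + 1 - 2 * k = 1 by omega] at h4
      exact Nat.dvd_one.mp h4
    · -- large c case: k must be odd; steps are 1 or 2, some step is 2, gcd divides 2
      have hk : k % 2 = 1 := by
        rcases hcase with h | h
        · exact Nat.odd_iff.mp h
        · omega
      have hB : q + 2 ≤ 2 * c := by omega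
      have hstep : ∀ j, j < N →
          c * (2 * j + 1) / q + 1 ≤ c * (2 * (j + 1) + 1) / q ∧
          c * (2 * (j + 1) + 1) / q ≤ c * (2 * j + 1) / q + 1 + 1 := by
        intro j hj
        have e : c * (2 * (j + 1) + 1) = c * (2 * j + 1) + 2 * c := by ring
        constructor
        · have h1 := Nat.div_le_div_right (c := q) (show c * (2 * j + 1) + q ≤ c * (2 * (j + 1) + 1) by omega)
          rw [Nat.add_div_right _ hq0] at h1
          omega
        · have h1 := Nat.div_le_div_right (c := q) (show c * (2 * (j + 1) + 1) ≤ c * (2 * j + 1) + 2 * q by omega)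
          rw [Nat.add_mul_div_right _ _ hq0] at h1
          omega
      have hne : c * (2 * N + 1) / q ≠ c * (2 * 0 + 1) / q + N * 1 := by
        rw [hfN, hf0]
        omega
      obtain ⟨j, hjN, hjs⟩ := exists_step _ N 1 hstep hne
      have h1 := hdvd (2 * j + 1) (by omega) (by omega) (by omega)
      have h2 := hdvd (2 * (j + 1) + 1) (by omega) (by omega) (by omega)
      rw [hval] at h1 h2
      rw [hjs] at h2
      have e : k * (2 * (j + 1) + 1) + (c * (2 * j + 1) / q + 1 + 1)
          = (k * (2 * j + 1) + c * (2 * j + 1) / q) + (2 * k + 2) := by ring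
      rw [e] at h2
      have h3 : dnq 2 q n ∣ 2 * k + 2 := (Nat.dvd_add_right h1).mp h2
      have h4 := Nat.dvd_sub h3 (Dvd.dvd.mul_left hdk 2)
      rw [show 2 * k + 2 - 2 * k = 2 by omega] at h4
      -- gcd divides 2 and divides odd k, so gcd = 1
      have h5 : dnq 2 q n ≤ 2 := Nat.le_of_dvd (by norm_num) h4
      have h6 : dnq 2 q n ≠ 0 := by
        intro h
        rw [h] at h4
        exact absurd (Nat.eq_zero_of_zero_dvd h4) (by norm_num)
      have h7 : dnq 2 q n ≠ 2 := by
        intro h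
        rw [h] at hdk
        obtain ⟨u, hu⟩ := hdk
        omega
      omega
  refine ⟨main, fun hnq => ?_⟩
  have h2m : q / 2 = 2 * m := by omega
  have hk0 : k = 0 := by
    by_contra hk
    have hle : q ≤ k * q := Nat.le_mul_of_pos_left q (Nat.pos_of_ne_zero hk)
    linarith
  apply main
  right
  rw [hk0] at hkc
  simp at hkc
  omega
end

section
/- Let p be a prime and n ≥ 3 an integer such that p divides neither n nor n − 1. Then d(n,p) = 1. -/
/-!
Pick `0 < i < p - 1` with `n * i ≡ -1 (mod p)`: it is the residue of `-n⁻¹`, and it is not `p - 1`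
because `n ≢ 1`. Since `n * i` has remainder `p - 1` and `n` a nonzero one, adding `n` carries, so
`⌊n(i+1)/p⌋ = ⌊ni/p⌋ + ⌊n/p⌋ + 1`, and `d(n,p)`, dividing all three floors, divides `1`.
-/

/-- `d(n,p)`: the greatest common divisor of the integers `⌊n·i/p⌋` over all
integers `i` with `0 < i < p`. -/
def dnp (p n : ℕ) : ℕ :=
  Finset.gcd (Finset.Ico 1 p) fun i => n * i / p

theorem Nat.add_div_eq_of_dvd_add_one {a b c : ℕ} (ha : c ∣ a + 1) (hb : ¬ c ∣ b) :
    (a + b) / c = a / c + b / c + 1 := by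
  have hc1 : 1 < c := by
    by_contra! h
    interval_cases c
    · simp at ha
    · exact hb (one_dvd b)
  have hac : c ≤ 1 % c + a % c :=
    Nat.le_mod_add_mod_of_dvd_add_of_not_dvd (by rwa [add_comm])
      (Nat.not_dvd_of_pos_of_lt one_pos hc1)
  have hbc : 0 < b % c := Nat.pos_of_ne_zero fun h => hb (Nat.dvd_of_mod_eq_zero h)
  rw [Nat.mod_eq_of_lt hc1] at hac
  exact Nat.add_div_eq_of_le_mod_add_mod (by omega) (by omega)

theorem Nat.Prime.exists_dvd_mul_add_one {p n : ℕ} (hp : p.Prime) (hn : ¬ p ∣ n)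
    (hn1 : ¬ p ∣ n - 1) : ∃ i, 0 < i ∧ i + 1 < p ∧ p ∣ n * i + 1 := by
  have := Fact.mk hp
  have hn_ne_zero : (n : ZMod p) ≠ 0 := by rwa [Ne, ZMod.natCast_eq_zero_iff]
  have hn_ne_one : (n : ZMod p) ≠ 1 := by
    intro h
    apply hn1
    rw [← Nat.modEq_iff_dvd' (Nat.pos_of_ne_zero (by rintro rfl; simp at hn)),
      ← ZMod.natCast_eq_natCast_iff, h, Nat.cast_one]
  set u : ZMod p := -(n : ZMod p)⁻¹
  have hu : (n : ZMod p) * u + 1 = 0 := by simp [u, hn_ne_zero]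
  have hu1 : u + 1 ≠ 0 := fun h => hn_ne_one (inv_eq_one.mp (by linear_combination -h))
  refine ⟨u.val, ZMod.val_pos.2 ?_, lt_of_le_of_ne (ZMod.val_lt u) fun h => hu1 ?_, ?_⟩
  · rintro h; simp [h] at hu
  · rw [← ZMod.natCast_zmod_val u, ← Nat.cast_one, ← Nat.cast_add, h, ZMod.natCast_self]
  · rw [← ZMod.natCast_eq_zero_iff]; push_cast; rwa [ZMod.natCast_zmod_val]

theorem dnp_dvd_div {p i : ℕ} (n : ℕ) (hi : 0 < i) (hip : i < p) : dnp p n ∣ n * i / p :=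
  Finset.gcd_dvd (Finset.mem_Ico.2 ⟨hi, hip⟩)

theorem dnp_eq_one_general (p : ℕ) (hp : p.Prime) (n : ℕ)
    (hpn : ¬ p ∣ n) (hpn1 : ¬ p ∣ n - 1) :
    dnp p n = 1 := by
  obtain ⟨i, hi, hip, hdvd⟩ := hp.exists_dvd_mul_add_one hpn hpn1
  have hsucc : n * (i + 1) / p = n * i / p + n * 1 / p + 1 := by
    simp only [mul_add, mul_one]
    exact Nat.add_div_eq_of_dvd_add_one hdvd hpn
  have hd := dnp_dvd_div n (by omega : 0 < i + 1) hip
  rw [hsucc] at hd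
  exact Nat.dvd_one.mp ((Nat.dvd_add_right (Nat.dvd_add (dnp_dvd_div n hi (by omega))
    (dnp_dvd_div n one_pos hp.one_lt))).mp hd)

/-- Let `p` be a prime and `n ≥ 3` an integer such that `p` divides neither `n`
nor `n - 1`. Then `d(n,p) = 1`. -/
theorem dnp_eq_one (p : ℕ) (hp : p.Prime) (n : ℕ) (hn : 3 ≤ n)
    (hpn : ¬ p ∣ n) (hpn1 : ¬ p ∣ n - 1) :
    dnp p n = 1 :=
  dnp_eq_one_general p hp n hpn hpn1
end
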